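/- arXiv:2010.16385 — 2 statements merged into one kernel-verified Lean document; each statement's English description precedes it below -/
import Mathlib

section
/- In the reduction from rf-poset realizability to reverse rf-poset realizability, the constructed relation P' on the extended event set X' is a partial order (in particular, it is acyclic). -/
/- STATEMENT 11: in the reduction from rf-poset realizability to reverse rf-poset
realizability, the constructed relation P' on the extended event set is a partial
order (in particular it is acyclic; as it is transitive by construction,
acyclicity amounts to irreflexivity).

The extended event set consists of the original events `orig o`, for each dominant
pair `d` (with endpoints `E1 d <_P E2 d`) the fresh triplet events `w d`, `r d`,
`w' d`, and the distinguished triplet `wbar, rbar, wpbar`. -/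

inductive Ev (O D : Type) where
  | orig (o : O)
  | w (d : D)
  | r (d : D)
  | w' (d : D)
  | wbar
  | rbar
  | wpbar

/-- The constructed relation P': the original order on original events; each
triplet's write before its read; `r_{e1,e2} <' w_{e1',e2'}` and
`w'_{e1,e2} <' w'_{e1',e2'}` whenever `e1 <_P e1'` and `e2 <_P e2'`;
and the anchor orderings `e1 <' r_{e1,e2}`, `w'_{e1,e2} <' e2`,
`w_{e1,e2} <' rbar`, `wpbar <' w'_{e1,e2}`; closed under transitivity. -/
inductive PPrime {O D : Type} (P : O → O → Prop) (E1 E2 : D → O) :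
    Ev O D → Ev O D → Prop
  | base {o o' : O} : P o o' → PPrime P E1 E2 (.orig o) (.orig o')
  | wr (d : D) : PPrime P E1 E2 (.w d) (.r d)
  | wrbar : PPrime P E1 E2 .wbar .rbar
  | cross_rw {d d' : D} : P (E1 d) (E1 d') → P (E2 d) (E2 d') →
      PPrime P E1 E2 (.r d) (.w d')
  | cross_ww {d d' : D} : P (E1 d) (E1 d') → P (E2 d) (E2 d') →
      PPrime P E1 E2 (.w' d) (.w' d')
  | anchor1 (d : D) : PPrime P E1 E2 (.orig (E1 d)) (.r d)
  | anchor2 (d : D) : PPrime P E1 E2 (.w' d) (.orig (E2 d))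
  | anchor3 (d : D) : PPrime P E1 E2 (.w d) .rbar
  | anchor4 (d : D) : PPrime P E1 E2 .wpbar (.w' d)
  | trans {a b c : Ev O D} : PPrime P E1 E2 a b → PPrime P E1 E2 b c →
      PPrime P E1 E2 a c

/-- Stratification of the extended event set into layers. -/
def Ev.layer {O D : Type} : Ev O D → ℕ
  | .wpbar => 0
  | .wbar => 0
  | .w' _ => 1
  | .orig _ => 2
  | .w _ => 3
  | .r _ => 3
  | .rbar => 4

/-- Within-layer strict comparison. -/
def EvInner {O D : Type} (P : O → O → Prop) (E1 : D → O) :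
    Ev O D → Ev O D → Prop
  | .orig o, .orig o' => P o o'
  | .w d, .r d' => d = d' ∨ P (E1 d) (E1 d')
  | .w d, .w d' => P (E1 d) (E1 d')
  | .r d, .w d' => P (E1 d) (E1 d')
  | .r d, .r d' => P (E1 d) (E1 d')
  | .w' d, .w' d' => P (E1 d) (E1 d')
  | _, _ => False

/-- Global strict ranking: lower layer, or same layer and inner comparison. -/
def EvRank {O D : Type} (P : O → O → Prop) (E1 : D → O) (a b : Ev O D) : Prop :=
  a.layer < b.layer ∨ (a.layer = b.layer ∧ EvInner P E1 a b)

theorem evRank_trans {O D : Type} (P : O → O → Prop) (E1 : D → O)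
    (htrans : Transitive P) {a b c : Ev O D}
    (hab : EvRank P E1 a b) (hbc : EvRank P E1 b c) : EvRank P E1 a c := by
  rcases hab with h1 | ⟨h1, h1'⟩ <;> rcases hbc with h2 | ⟨h2, h2'⟩
  · exact Or.inl (h1.trans h2)
  · exact Or.inl (h2 ▸ h1)
  · exact Or.inl (h1 ▸ h2)
  · refine Or.inr ⟨h1.trans h2, ?_⟩
    cases a <;> cases b <;> cases c <;>
      simp_all [EvInner, Ev.layer] <;>
      (try rcases h1' with rfl | h1') <;> (try rcases h2' with rfl | h2') <;>
      first
        | exact htrans h1' h2'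
        | exact Or.inr h2'
        | exact Or.inr h1'
        | exact Or.inr (htrans h1' h2')
        | exact h1'
        | exact h2'

theorem pprime_rank {O D : Type} (P : O → O → Prop) (E1 E2 : D → O)
    (htrans : Transitive P) {a b : Ev O D}
    (h : PPrime P E1 E2 a b) : EvRank P E1 a b := by
  induction h with
  | base h => exact Or.inr ⟨rfl, h⟩
  | wr d => exact Or.inr ⟨rfl, Or.inl rfl⟩
  | wrbar => exact Or.inl (by simp [Ev.layer])
  | cross_rw h1 _ => exact Or.inr ⟨rfl, h1⟩
  | cross_ww h1 _ => exact Or.inr ⟨rfl, h1⟩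
  | anchor1 d => exact Or.inl (by simp [Ev.layer])
  | anchor2 d => exact Or.inl (by simp [Ev.layer])
  | anchor3 d => exact Or.inl (by simp [Ev.layer])
  | anchor4 d => exact Or.inl (by simp [Ev.layer])
  | trans _ _ ih1 ih2 => exact evRank_trans P E1 htrans ih1 ih2

theorem stmt11 {O D : Type} (P : O → O → Prop) (E1 E2 : D → O)
    (htrans : Transitive P) (hirrefl : Irreflexive P)
    (hdom : ∀ d : D, P (E1 d) (E2 d)) :
    ∀ a : Ev O D, ¬ PPrime P E1 E2 a a := by
  intro a h
  rcases pprime_rank P E1 E2 htrans h with h' | ⟨_, h'⟩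
  · exact lt_irrefl _ h'
  · cases a <;> simp_all [EvInner] <;> exact hirrefl _ h'
end

section
/- In the reduction for reverse rf-poset realizability, the relation Q obtained from the partial order P' by additionally ordering, in every rf-triplet (w, r, w'), the interfering write w' before the write w, is acyclic; hence any linearization σ of Q is a trace realizing the rf-poset P' (every read observes its designated write). -/
/-- The relation Q: the generating rules of P' together with the reversal edges
`w' d < w d` (and `wpbar < wbar`), closed under transitivity. -/
inductive QOrd {O D : Type} (P : O → O → Prop) (E1 E2 : D → O) :
    Ev O D → Ev O D → Prop
  | base {o o' : O} : P o o' → QOrd P E1 E2 (.orig o) (.orig o')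
  | wr (d : D) : QOrd P E1 E2 (.w d) (.r d)
  | wrbar : QOrd P E1 E2 .wbar .rbar
  | cross_rw {d d' : D} : P (E1 d) (E1 d') → P (E2 d) (E2 d') →
      QOrd P E1 E2 (.r d) (.w d')
  | cross_ww {d d' : D} : P (E1 d) (E1 d') → P (E2 d) (E2 d') →
      QOrd P E1 E2 (.w' d) (.w' d')
  | anchor1 (d : D) : QOrd P E1 E2 (.orig (E1 d)) (.r d)
  | anchor2 (d : D) : QOrd P E1 E2 (.w' d) (.orig (E2 d))
  | anchor3 (d : D) : QOrd P E1 E2 (.w d) .rbar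
  | anchor4 (d : D) : QOrd P E1 E2 .wpbar (.w' d)
  | rev (d : D) : QOrd P E1 E2 (.w' d) (.w d)
  | revbar : QOrd P E1 E2 .wpbar .wbar
  | trans {a b c : Ev O D} : QOrd P E1 E2 a b → QOrd P E1 E2 b c →
      QOrd P E1 E2 a c

inductive Oe (O : Type) where
  | bot | top | el (o : O)

def oLt {O : Type} (P : O → O → Prop) : Oe O → Oe O → Prop
  | .bot, .top => True
  | .bot, .el _ => True
  | .el _, .top => True
  | .el a, .el b => P a b
  | _, _ => False

def oLe {O : Type} (P : O → O → Prop) (x y : Oe O) : Prop := x = y ∨ oLt P x y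

lemma oLt_trans {O : Type} {P : O → O → Prop} (htrans : Transitive P) :
    ∀ {x y z : Oe O}, oLt P x y → oLt P y z → oLt P x z := by
  intro x y z h1 h2
  cases x <;> cases y <;> cases z <;> simp [oLt] at * <;> exact htrans h1 h2

lemma oLe_trans {O : Type} {P : O → O → Prop} (htrans : Transitive P) :
    ∀ {x y z : Oe O}, oLe P x y → oLe P y z → oLe P x z := by
  rintro x y z (rfl | h1) (rfl | h2)
  · exact Or.inl rfl
  · exact Or.inr h2
  · exact Or.inr h1
  · exact Or.inr (oLt_trans htrans h1 h2)

lemma oLt_of_lt_of_le {O : Type} {P : O → O → Prop} (htrans : Transitive P) :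
    ∀ {x y z : Oe O}, oLt P x y → oLe P y z → oLt P x z := by
  rintro x y z h1 (rfl | h2)
  · exact h1
  · exact oLt_trans htrans h1 h2

lemma oLt_of_le_of_lt {O : Type} {P : O → O → Prop} (htrans : Transitive P) :
    ∀ {x y z : Oe O}, oLe P x y → oLt P y z → oLt P x z := by
  rintro x y z (rfl | h1) h2
  · exact h2
  · exact oLt_trans htrans h1 h2

def fEv {O D : Type} (E1 E2 : D → O) : Ev O D → Oe O × Oe O × ℕ
  | .orig o => (.el o, .el o, 0)
  | .w' d => (.el (E1 d), .el (E2 d), 1)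
  | .w d => (.el (E1 d), .el (E2 d), 2)
  | .r d => (.el (E1 d), .el (E2 d), 3)
  | .wpbar => (.bot, .bot, 0)
  | .wbar => (.top, .top, 1)
  | .rbar => (.top, .top, 2)

def SLT {O : Type} (P : O → O → Prop) (x y : Oe O × Oe O × ℕ) : Prop :=
  oLe P x.1 y.1 ∧ oLe P x.2.1 y.2.1 ∧
    (oLt P x.1 y.1 ∨ oLt P x.2.1 y.2.1 ∨ x.2.2 < y.2.2)

lemma SLT_trans {O : Type} {P : O → O → Prop} (htrans : Transitive P)
    {x y z : Oe O × Oe O × ℕ} (h1 : SLT P x y) (h2 : SLT P y z) : SLT P x z := by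
  obtain ⟨a1, b1, s1⟩ := h1
  obtain ⟨a2, b2, s2⟩ := h2
  refine ⟨oLe_trans htrans a1 a2, oLe_trans htrans b1 b2, ?_⟩
  rcases s1 with h | h | h
  · exact Or.inl (oLt_of_lt_of_le htrans h a2)
  · exact Or.inr (Or.inl (oLt_of_lt_of_le htrans h b2))
  · rcases s2 with h' | h' | h'
    · exact Or.inl (oLt_of_le_of_lt htrans a1 h')
    · exact Or.inr (Or.inl (oLt_of_le_of_lt htrans b1 h'))
    · exact Or.inr (Or.inr (h.trans h'))

lemma qord_slt {O D : Type} {P : O → O → Prop} {E1 E2 : D → O}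
    (htrans : Transitive P) (hdom : ∀ d : D, P (E1 d) (E2 d)) :
    ∀ {a b : Ev O D}, QOrd P E1 E2 a b → SLT P (fEv E1 E2 a) (fEv E1 E2 b) := by
  intro a b h
  induction h with
  | base h => exact ⟨Or.inr h, Or.inr h, Or.inl h⟩
  | wr d => exact ⟨Or.inl rfl, Or.inl rfl, Or.inr (Or.inr (by simp [fEv]))⟩
  | wrbar => exact ⟨Or.inl rfl, Or.inl rfl, Or.inr (Or.inr (by simp [fEv]))⟩
  | cross_rw h1 h2 => exact ⟨Or.inr h1, Or.inr h2, Or.inl h1⟩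
  | cross_ww h1 h2 => exact ⟨Or.inr h1, Or.inr h2, Or.inl h1⟩
  | anchor1 d => exact ⟨Or.inl rfl, Or.inr (hdom d), Or.inr (Or.inl (hdom d))⟩
  | anchor2 d => exact ⟨Or.inr (hdom d), Or.inl rfl, Or.inl (hdom d)⟩
  | anchor3 d => exact ⟨Or.inr trivial, Or.inr trivial, Or.inl trivial⟩
  | anchor4 d => exact ⟨Or.inr trivial, Or.inr trivial, Or.inl trivial⟩
  | rev d => exact ⟨Or.inl rfl, Or.inl rfl, Or.inr (Or.inr (by simp [fEv]))⟩
  | revbar => exact ⟨Or.inr trivial, Or.inr trivial, Or.inl trivial⟩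
  | trans _ _ ih1 ih2 => exact SLT_trans htrans ih1 ih2

lemma oLt_irrefl {O : Type} {P : O → O → Prop} (hirrefl : Irreflexive P)
    (x : Oe O) : ¬ oLt P x x := by
  cases x <;> simp [oLt] <;> exact hirrefl _

theorem stmt12 {O D : Type} (P : O → O → Prop) (E1 E2 : D → O)
    (htrans : Transitive P) (hirrefl : Irreflexive P)
    (hdom : ∀ d : D, P (E1 d) (E2 d)) :
    (∀ a : Ev O D, ¬ QOrd P E1 E2 a a) ∧
    (∀ L : Ev O D → Ev O D → Prop,
      Transitive L → Irreflexive L → (∀ a b : Ev O D, a ≠ b → L a b ∨ L b a) →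
      (∀ a b : Ev O D, QOrd P E1 E2 a b → L a b) →
      ((∀ d : D, L (.w d) (.r d) ∧ ¬ (L (.w d) (.w' d) ∧ L (.w' d) (.r d))) ∧
       (L .wbar .rbar ∧ ¬ (L .wbar .wpbar ∧ L .wpbar .rbar)))) := by

  have hirr : ∀ a : Ev O D, ¬ QOrd P E1 E2 a a := by
    intro a ha
    have := qord_slt htrans hdom ha
    rcases this.2.2 with h | h | h
    · exact oLt_irrefl hirrefl _ h
    · exact oLt_irrefl hirrefl _ h
    · omega
  refine ⟨hirr, ?_⟩
  intro L hLt hLi _ hQL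
  refine ⟨fun d => ⟨hQL _ _ (QOrd.wr d), ?_⟩, hQL _ _ QOrd.wrbar, ?_⟩
  · rintro ⟨h1, -⟩
    exact hLi _ (hLt h1 (hQL _ _ (QOrd.rev d)))
  · rintro ⟨h1, -⟩
    exact hLi _ (hLt h1 (hQL _ _ QOrd.revbar))
end
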